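/- arXiv:1211.2872 — 5 statements merged into one kernel-verified Lean document; each statement's English description precedes it below -/
import Mathlib

section
/- Let X be a metric space, let 𝒰 = {U_i}_{i∈I} be an open cover of X, and let 𝒲 be an open refinement of 𝒰 such that the (s+ε)-Hausdorff content of the set of points covered by at least m members of 𝒲 is at most ε. Then there exists an open shrinking 𝒱 = {V_i}_{i∈I} of 𝒰 (i.e. V_i ⊆ U_i for all i and ∪_i V_i = X) such that the (s+ε)-Hausdorff content of the set of points covered by at least m members of 𝒱 is at most ε. -/
open scoped ENNReal NNReal

/-- The `s`-Hausdorff content of a set `A` in a metric space. -/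
noncomputable def hContent {X : Type*} [EMetricSpace X] (s : ℝ) (A : Set X) : ℝ≥0∞ :=
  ⨅ (U : ℕ → Set X) (_ : A ⊆ ⋃ i, U i), ∑' i, EMetric.diam (U i) ^ s

/-- `Tm U m` is the set of points covered by at least `m` members of the family `U`. -/
def Tm {X ι : Type*} (U : ι → Set X) (m : ℕ) : Set X :=
  {x | ∃ S : Finset ι, m ≤ S.card ∧ ∀ i ∈ S, x ∈ U i}

lemma hContent_mono {X : Type*} [EMetricSpace X] (s : ℝ) {A B : Set X} (h : A ⊆ B) :
    hContent s A ≤ hContent s B := by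
  refine le_iInf₂ fun Uc hUc => iInf₂_le Uc (h.trans hUc)

theorem stmt3 {X ι κ : Type*} [MetricSpace X] (m : ℕ) (hm : 0 < m)
    (s ε : ℝ) (hs : 0 ≤ s) (hε : 0 < ε)
    (U : ι → Set X) (hUo : ∀ i, IsOpen (U i)) (hUc : ⋃ i, U i = Set.univ)
    (W : κ → Set X) (hWo : ∀ j, IsOpen (W j)) (hWc : ⋃ j, W j = Set.univ)
    (href : ∀ j, ∃ i, W j ⊆ U i)
    (hW : hContent (s + ε) (Tm W m) ≤ ENNReal.ofReal ε) :
    ∃ V : ι → Set X, (∀ i, IsOpen (V i)) ∧ (∀ i, V i ⊆ U i) ∧ (⋃ i, V i) = Set.univ ∧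
      hContent (s + ε) (Tm V m) ≤ ENNReal.ofReal ε := by
  classical
  choose c hc using href
  set V : ι → Set X := fun i => ⋃ j ∈ {j | c j = i}, W j with hV
  refine ⟨V, ?_, ?_, ?_, ?_⟩
  · intro i
    exact isOpen_biUnion fun j _ => hWo j
  · intro i x hx
    simp only [V, Set.mem_iUnion] at hx
    obtain ⟨j, hj, hxj⟩ := hx
    exact hj ▸ hc j hxj
  · apply Set.eq_univ_of_univ_subset
    rw [← hWc]
    refine Set.iUnion_subset fun j x hx => ?_
    exact Set.mem_iUnion.2 ⟨c j, Set.mem_biUnion rfl hx⟩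
  · refine le_trans (hContent_mono _ ?_) hW
    intro x hx
    obtain ⟨S, hcard, hmem⟩ := hx
    have : ∀ i ∈ S, ∃ j, c j = i ∧ x ∈ W j := by
      intro i hi
      have := hmem i hi
      simp only [V, Set.mem_iUnion] at this
      obtain ⟨j, hj, hxj⟩ := this
      exact ⟨j, hj, hxj⟩
    choose g hg1 hg2 using this
    refine ⟨S.attach.image (fun i => g i.1 i.2), ?_, ?_⟩
    · rw [Finset.card_image_of_injective _ ?inj, Finset.card_attach]
      · exact hcard
      case inj =>
        intro a b hab
        have : c (g a.1 a.2) = c (g b.1 b.2) := congrArg c hab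
        rw [hg1, hg1] at this
        exact Subtype.ext this
    · intro j hj
      simp only [Finset.mem_image, Finset.mem_attach] at hj
      obtain ⟨i, _, rfl⟩ := hj
      exact hg2 _ _
end

section
/- Let X be a separable metric space, m a positive integer, s ≥ 0, and suppose that for every ε > 0, every m-element open cover {U_1,…,U_m} of X admits an open shrinking {V_1,…,V_m} with H^{s+ε}_∞(V_1 ∩ … ∩ V_m) ≤ ε. Then for every ε > 0, every finite open cover {U_1,…,U_k} of X admits an open shrinking {V_1,…,V_k} such that the (s+ε)-Hausdorff content of the set of points covered by at least m of the sets V_i is at most ε. -/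
open scoped ENNReal NNReal

/-!
Shrinking one `m`-element subfamily at a time only makes the earlier intersections smaller, so
after running through all `(k choose m)` subfamilies of a `k`-cover, each `m`-fold intersection has
`(s + ε')`-content at most `ε'`, for a suitably small `ε' ≤ ε`. Their union contains the set of points covered at least `m`
times, so by subadditivity its content is at most `(k choose m) ε' < 1`. Below `1`, covers
witnessing the content consist of sets of diameter at most `1`, so raising the exponent from
`s + ε'` to `s + ε` does not increase the content.
-/

open Set MeasureTheory

namespace hContent

variable {X : Type*} [EMetricSpace X] {s t : ℝ}

theorem eq_ofFunction (hs : 0 < s) :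
    hContent (X := X) s =
      OuterMeasure.ofFunction (fun A => Metric.ediam A ^ s) (by simp [hs]) :=
  rfl

theorem mono {A B : Set X} (h : A ⊆ B) : hContent s A ≤ hContent s B :=
  le_iInf₂ fun U hU => iInf₂_le U (h.trans hU)

theorem biUnion_finset_le {ι : Type*} (hs : 0 < s) (T : Finset ι) (A : ι → Set X) :
    hContent s (⋃ i ∈ T, A i) ≤ ∑ i ∈ T, hContent s (A i) := by
  rw [eq_ofFunction hs]
  exact measure_biUnion_finset_le T A

theorem le_of_exponent_le (hs : 0 < s) (hst : s ≤ t) {A : Set X} (hA : hContent s A < 1) :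
    hContent t A ≤ hContent s A := by
  refine le_of_forall_gt fun c hc => ?_
  obtain ⟨U, hU, hsum⟩ : ∃ U : ℕ → Set X, ∃ _ : A ⊆ ⋃ i, U i,
      ∑' i, Metric.ediam (U i) ^ s < min c 1 := by
    simpa only [eq_ofFunction hs, OuterMeasure.ofFunction_apply, iInf_lt_iff] using lt_min hc hA
  have hdiam (i : ℕ) : Metric.ediam (U i) ≤ 1 := by
    by_contra! h
    exact (ENNReal.le_tsum i).not_gt <|
      (hsum.trans_le (min_le_right _ _)).trans_le (ENNReal.one_le_rpow h.le hs)
  calc hContent t A ≤ ∑' i, Metric.ediam (U i) ^ t := iInf₂_le U hU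
    _ ≤ ∑' i, Metric.ediam (U i) ^ s :=
      ENNReal.tsum_le_tsum fun i => ENNReal.rpow_le_rpow_of_exponent_ge (hdiam i) hst
    _ < c := hsum.trans_le (min_le_left _ _)

end hContent

section Shrinking

variable {X ι : Type*}

structure IsOpenCover [TopologicalSpace X] (U : ι → Set X) : Prop where
  isOpen : ∀ i, IsOpen (U i)
  iUnion_eq : ⋃ i, U i = univ

structure IsOpenShrinking [TopologicalSpace X] (V U : ι → Set X) : Prop
    extends IsOpenCover V where
  subset : ∀ i, V i ⊆ U i

theorem IsOpenShrinking.trans [TopologicalSpace X] {U V W : ι → Set X}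
    (hWV : IsOpenShrinking W V) (hVU : IsOpenShrinking V U) : IsOpenShrinking W U :=
  ⟨hWV.toIsOpenCover, fun i => (hWV.subset i).trans (hVU.subset i)⟩

theorem IsOpenCover.comp_equiv [TopologicalSpace X] {κ : Type*} {U : ι → Set X}
    (h : IsOpenCover U) (e : κ ≃ ι) : IsOpenCover (U ∘ e) :=
  ⟨fun j => h.isOpen (e j), by rw [Function.comp_def, e.surjective.iUnion_comp U, h.iUnion_eq]⟩

theorem IsOpenShrinking.comp_equiv [TopologicalSpace X] {κ : Type*} {U V : ι → Set X}
    (h : IsOpenShrinking V U) (e : κ ≃ ι) : IsOpenShrinking (V ∘ e) (U ∘ e) :=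
  ⟨h.toIsOpenCover.comp_equiv e, fun j => h.subset (e j)⟩

def HasSmallIntersectionShrinking (ι X : Type*) [EMetricSpace X] (t : ℝ) (c : ℝ≥0∞) : Prop :=
  ∀ U : ι → Set X, IsOpenCover U → ∃ V, IsOpenShrinking V U ∧ hContent t (⋂ i, V i) ≤ c

variable [EMetricSpace X] {t : ℝ} {c : ℝ≥0∞}

theorem HasSmallIntersectionShrinking.of_equiv {κ : Type*} (e : ι ≃ κ)
    (h : HasSmallIntersectionShrinking κ X t c) : HasSmallIntersectionShrinking ι X t c := by
  intro U hU
  obtain ⟨V, hV, hVc⟩ := h (U ∘ e.symm) (hU.comp_equiv e.symm)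
  refine ⟨V ∘ e, ?_, by rwa [Function.comp_def, e.surjective.iInter_comp V]⟩
  simpa [Function.comp_def] using hV.comp_equiv e

/-- Shrinking a cover so that the intersection over one subfamily `S` becomes small: the members
outside `S` are absorbed into those of `S`, the resulting `S`-indexed cover is shrunk, and the
shrinking is pulled back by intersecting with the original members. -/
theorem HasSmallIntersectionShrinking.exists_shrinking_biInter_le {V : ι → Set X}
    (hV : IsOpenCover V) {S : Finset ι} (hS : S.Nonempty)
    (h : HasSmallIntersectionShrinking S X t c) :
    ∃ V', IsOpenShrinking V' V ∧ hContent t (⋂ i ∈ S, V' i) ≤ c := by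
  classical
  obtain ⟨i₀, hi₀⟩ := hS
  set R := ⋃ i ∉ S, V i
  have hcover : IsOpenCover fun j : S => V j ∪ R := by
    refine ⟨fun j => (hV.isOpen j).union (isOpen_biUnion fun i _ => hV.isOpen i), ?_⟩
    refine eq_univ_of_forall fun x => ?_
    obtain ⟨i, hi⟩ := mem_iUnion.1 (hV.iUnion_eq ▸ mem_univ x)
    by_cases hiS : i ∈ S
    · exact mem_iUnion.2 ⟨⟨i, hiS⟩, Or.inl hi⟩
    · exact mem_iUnion.2 ⟨⟨i₀, hi₀⟩, Or.inr (mem_biUnion hiS hi)⟩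
  obtain ⟨W, hW, hWc⟩ := h _ hcover
  refine ⟨fun i => if hi : i ∈ S then V i ∩ W ⟨i, hi⟩ else V i, ⟨⟨fun i => ?_, ?_⟩, fun i => ?_⟩,
    (hContent.mono fun x hx => mem_iInter.2 fun j => ?_).trans hWc⟩
  · split_ifs
    exacts [(hV.isOpen i).inter (hW.isOpen _), hV.isOpen i]
  · refine eq_univ_of_forall fun x => ?_
    obtain ⟨j, hj⟩ := mem_iUnion.1 (hW.iUnion_eq ▸ mem_univ x)
    rcases hW.subset j hj with hx | hx
    · exact mem_iUnion.2 ⟨j, by simp [j.2, hx, hj]⟩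
    · obtain ⟨i, hiS, hi⟩ := mem_iUnion₂.1 hx
      exact mem_iUnion.2 ⟨i, by simp [hiS, hi]⟩
  · split_ifs
    exacts [inter_subset_left, subset_rfl]
  · have hxj := mem_iInter₂.1 hx j j.2
    simp only [dif_pos j.2] at hxj
    exact hxj.2

theorem HasSmallIntersectionShrinking.exists_shrinking_forall_biInter_le {m : ℕ} (hm : 0 < m)
    (h : HasSmallIntersectionShrinking (Fin m) X t c) {U : ι → Set X} (hU : IsOpenCover U)
    (𝒯 : Finset (Finset ι)) (h𝒯 : ∀ S ∈ 𝒯, S.card = m) :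
    ∃ V, IsOpenShrinking V U ∧ ∀ S ∈ 𝒯, hContent t (⋂ i ∈ S, V i) ≤ c := by
  classical
  induction 𝒯 using Finset.induction_on with
  | empty => exact ⟨U, ⟨hU, fun _ => subset_rfl⟩, by simp⟩
  | insert S 𝒯 _ ih =>
    obtain ⟨V, hV, hV𝒯⟩ := ih fun T hT => h𝒯 T (Finset.mem_insert_of_mem hT)
    have hSm : S.card = m := h𝒯 S (Finset.mem_insert_self S 𝒯)
    obtain ⟨V', hV', hV'S⟩ := (h.of_equiv (Finset.equivFinOfCardEq hSm)).exists_shrinking_biInter_le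
      hV.toIsOpenCover (Finset.card_pos.1 (hSm ▸ hm))
    refine ⟨V', hV'.trans hV, (Finset.forall_mem_insert _ _ _).2 ⟨hV'S, fun T hT => ?_⟩⟩
    exact (hContent.mono (biInter_mono subset_rfl fun i _ => hV'.subset i)).trans (hV𝒯 T hT)

end Shrinking

theorem Tm_subset_biUnion_powersetCard {X ι : Type*} [Fintype ι] (V : ι → Set X) (m : ℕ) :
    Tm V m ⊆ ⋃ S ∈ Finset.powersetCard m Finset.univ, ⋂ i ∈ S, V i := by
  rintro x ⟨T, hTm, hxT⟩
  obtain ⟨S, hST, hSm⟩ := Finset.exists_subset_card_eq hTm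
  exact mem_biUnion (Finset.mem_powersetCard.2 ⟨Finset.subset_univ S, hSm⟩)
    (mem_iInter₂.2 fun i hi => hxT i (hST hi))

theorem hContent_Tm_le {X ι : Type*} [EMetricSpace X] [Fintype ι] {t : ℝ} (ht : 0 < t)
    {c : ℝ≥0∞} {V : ι → Set X} {m : ℕ}
    (h : ∀ S ∈ Finset.powersetCard m Finset.univ, hContent t (⋂ i ∈ S, V i) ≤ c) :
    hContent t (Tm V m) ≤ (Fintype.card ι).choose m * c :=
  calc hContent t (Tm V m)
      ≤ ∑ S ∈ Finset.powersetCard m Finset.univ, hContent t (⋂ i ∈ S, V i) :=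
        (hContent.mono (Tm_subset_biUnion_powersetCard V m)).trans
          (hContent.biUnion_finset_le ht _ _)
    _ ≤ ∑ _S ∈ Finset.powersetCard m (Finset.univ : Finset ι), c := Finset.sum_le_sum h
    _ = (Fintype.card ι).choose m * c := by simp [Finset.card_powersetCard, nsmul_eq_mul]

theorem stmt4_general {X : Type*} [MetricSpace X]
    (m : ℕ) (hm : 0 < m) (s : ℝ) (hs : 0 ≤ s)
    (H : ∀ ε : ℝ, 0 < ε → ∀ U : Fin m → Set X, (∀ i, IsOpen (U i)) → (⋃ i, U i) = Set.univ →
      ∃ V : Fin m → Set X, (∀ i, IsOpen (V i)) ∧ (∀ i, V i ⊆ U i) ∧ (⋃ i, V i) = Set.univ ∧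
        hContent (s + ε) (⋂ i, V i) ≤ ENNReal.ofReal ε) :
    ∀ ε : ℝ, 0 < ε → ∀ (k : ℕ) (U : Fin k → Set X), (∀ i, IsOpen (U i)) →
      (⋃ i, U i) = Set.univ →
      ∃ V : Fin k → Set X, (∀ i, IsOpen (V i)) ∧ (∀ i, V i ⊆ U i) ∧ (⋃ i, V i) = Set.univ ∧
        hContent (s + ε) (Tm V m) ≤ ENNReal.ofReal ε := by
  intro ε hε k U hUo hUc
  set C : ℕ := k.choose m
  set ε' : ℝ := min ε 1 / (C + 1)
  have hε' : 0 < ε' := by positivity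
  have hCε' : C * ε' < min ε 1 := by
    rw [mul_div_assoc', div_lt_iff₀ (by positivity)]
    nlinarith [lt_min hε one_pos]
  have hH : HasSmallIntersectionShrinking (Fin m) X (s + ε') (ENNReal.ofReal ε') := fun U hU =>
    let ⟨V, hVo, hVU, hVc, hVε⟩ := H ε' hε' U hU.isOpen hU.iUnion_eq
    ⟨V, ⟨⟨hVo, hVc⟩, hVU⟩, hVε⟩
  obtain ⟨V, hV, hVS⟩ := hH.exists_shrinking_forall_biInter_le hm ⟨hUo, hUc⟩
    (Finset.powersetCard m Finset.univ) fun S hS => (Finset.mem_powersetCard.1 hS).2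
  have hsε' : 0 < s + ε' := add_pos_of_nonneg_of_pos hs hε'
  have hTm : hContent (s + ε') (Tm V m) ≤ ENNReal.ofReal (C * ε') := by
    rw [ENNReal.ofReal_mul (Nat.cast_nonneg C), ENNReal.ofReal_natCast]
    simpa using hContent_Tm_le hsε' hVS
  have hε'ε : ε' ≤ ε := (div_le_self (by positivity) (by simp)).trans (min_le_left _ _)
  have hTm_lt : hContent (s + ε') (Tm V m) < 1 :=
    hTm.trans_lt (ENNReal.ofReal_lt_one.2 (hCε'.trans_le (min_le_right _ _)))
  refine ⟨V, hV.isOpen, hV.subset, hV.iUnion_eq, ?_⟩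
  calc hContent (s + ε) (Tm V m)
      ≤ hContent (s + ε') (Tm V m) := hContent.le_of_exponent_le hsε' (by linarith) hTm_lt
    _ ≤ ENNReal.ofReal ε := hTm.trans (ENNReal.ofReal_le_ofReal (hCε'.le.trans (min_le_left _ _)))

theorem stmt4 {X : Type*} [MetricSpace X] [TopologicalSpace.SeparableSpace X]
    (m : ℕ) (hm : 0 < m) (s : ℝ) (hs : 0 ≤ s)
    (H : ∀ ε : ℝ, 0 < ε → ∀ U : Fin m → Set X, (∀ i, IsOpen (U i)) → (⋃ i, U i) = Set.univ →
      ∃ V : Fin m → Set X, (∀ i, IsOpen (V i)) ∧ (∀ i, V i ⊆ U i) ∧ (⋃ i, V i) = Set.univ ∧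
        hContent (s + ε) (⋂ i, V i) ≤ ENNReal.ofReal ε) :
    ∀ ε : ℝ, 0 < ε → ∀ (k : ℕ) (U : Fin k → Set X), (∀ i, IsOpen (U i)) →
      (⋃ i, U i) = Set.univ →
      ∃ V : Fin k → Set X, (∀ i, IsOpen (V i)) ∧ (∀ i, V i ⊆ U i) ∧ (⋃ i, V i) = Set.univ ∧
        hContent (s + ε) (Tm V m) ≤ ENNReal.ofReal ε :=
  stmt4_general m hm s hs H
end

section
/- Let K be a compact metric space, x₀ ∈ K a fixed point, and n a positive integer. Let K_i ⊆ K (i ∈ ℕ) be compact subsets such that diam(K_i ∪ {x₀}) → 0 as i → ∞, and suppose that for each i there exists a continuous map g : K_i → ℝⁿ with a stable value (i.e. there exist y ∈ ℝⁿ and ε > 0 such that every continuous h : K_i → ℝⁿ with sup-distance at most 2ε from g satisfies y ∈ h(K_i)). Then for the generic f ∈ C(K, ℝⁿ) (in the sense of Baire category in the sup norm), f(x₀) ∈ f(K_i) for infinitely many i ∈ ℕ. -/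
/-!
For each `N`, the maps lying in the interior of `{f | f x₀ ∈ f '' Ks i}` for some `i ≥ N` form an
open set; it is dense, hence the maps with `f x₀ ∈ f '' Ks i` infinitely often are generic. For
density, take `f` and pick `Ks i` so small that `f` varies little on `Ks i ∪ {x₀}`. By Tietze and an
Urysohn cutoff vanishing at `x₀`, perturb `f` slightly to `F` with `F x₀ = f x₀` and
`F = F x₀ + t • (g - y)` on `Ks i`, where `y` is a stable value of `g` and `t > 0` is small. If `h`
is close to `F`, then `h` restricted to `Ks i` is close to `h x₀ + t • (g - y)`, which has `h x₀`
as a stable value, so `h` attains `h x₀` on `Ks i`.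
-/

open Filter Metric Set Topology

section StableValue

variable {X Y : Type*} [TopologicalSpace X]

def IsStableValue [PseudoMetricSpace Y] (ε : ℝ) (g : X → Y) (y : Y) : Prop :=
  ∀ h : X → Y, Continuous h → (∀ x, dist (h x) (g x) ≤ ε) → y ∈ range h

theorem IsStableValue.affine [NormedAddCommGroup Y] [NormedSpace ℝ Y] {ε t : ℝ} {g : X → Y}
    {y : Y} (hg : IsStableValue ε g y) (c : Y) (ht : 0 < t) :
    IsStableValue (t * ε) (fun x => c + t • (g x - y)) c := by
  intro h hh hdist
  have key : ∀ x, y + t⁻¹ • (h x - c) - g x = t⁻¹ • (h x - (c + t • (g x - y))) := by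
    intro x
    simp only [smul_sub, smul_add, smul_smul, inv_mul_cancel₀ ht.ne', one_smul]
    abel
  obtain ⟨x, hx⟩ := hg (fun x => y + t⁻¹ • (h x - c)) (by fun_prop) fun x => by
    rw [dist_eq_norm, key, norm_smul, Real.norm_eq_abs, abs_inv, abs_of_pos ht, ← dist_eq_norm,
      inv_mul_le_iff₀ ht]
    exact hdist x
  refine ⟨x, ?_⟩
  simpa [sub_eq_zero, ht.ne'] using hx

end StableValue

section Perturbation

variable {X Y : Type*} [TopologicalSpace X] [CompactSpace X]
  [NormedAddCommGroup Y] [NormedSpace ℝ Y]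

theorem ContinuousMap.exists_dist_lt_apply_eq_restrict_eq [NormalSpace X] [T1Space X]
    [FiniteDimensional ℝ Y] (f : C(X, Y)) {A : Set X} (hA : IsClosed A) {x₀ : X} (hx₀ : x₀ ∉ A)
    (u : C(A, Y)) {r δ : ℝ} (hr : 0 < r) (hu : ∀ a, dist (u a) (f a) ≤ r) (hrδ : r < δ) :
    ∃ F : C(X, Y), dist F f < δ ∧ F x₀ = f x₀ ∧ F.restrict A = u := by
  have := Metric.instTietzeExtensionClosedBall ℝ (0 : Y) hr
  obtain ⟨Q, hQr, hQ⟩ := (u - f.restrict A).exists_forall_mem_restrict_eq hA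
    (t := closedBall 0 r) fun a => by simpa [dist_eq_norm] using hu a
  obtain ⟨χ, hχx₀, hχA, hχ01⟩ := exists_continuous_zero_one_of_isClosed isClosed_singleton hA
    (disjoint_singleton_left.2 hx₀)
  refine ⟨⟨fun x => f x + χ x • Q x, by fun_prop⟩, ?_, ?_, ?_⟩
  · refine (ContinuousMap.dist_le hr.le |>.2 fun x => ?_).trans_lt hrδ
    have hQx : ‖Q x‖ ≤ r := by simpa using hQr x
    calc dist (f x + χ x • Q x) (f x) = |χ x| * ‖Q x‖ := by
          rw [dist_eq_norm, add_sub_cancel_left, norm_smul, Real.norm_eq_abs]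
      _ ≤ 1 * r := by
          gcongr
          exact abs_le.2 ⟨by linarith [(hχ01 x).1], (hχ01 x).2⟩
      _ = r := one_mul r
  · simp [hχx₀ rfl]
  · ext a
    have hQa : Q a = u a - f a := by simpa using congr($hQ a)
    simp [hχA a.2, hQa]

theorem mem_interior_setOf_apply_mem_image_of_isStableValue (F : C(X, Y)) {A : Set X} {x₀ : X}
    {g : A → Y} {y : Y} {ε t : ℝ} (hε : 0 < ε) (ht : 0 < t) (hg : IsStableValue ε g y)
    (hF : ∀ a : A, F a = F x₀ + t • (g a - y)) :
    F ∈ interior {h : C(X, Y) | h x₀ ∈ h '' A} := by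
  refine mem_interior_iff_mem_nhds.2 <|
    mem_of_superset (ball_mem_nhds F (half_pos (mul_pos ht hε))) fun h hh => ?_
  have hclose : ∀ x, ‖h x - F x‖ < t * ε / 2 := fun x =>
    (dist_eq_norm (h x) (F x)).symm.trans_le (h.dist_apply_le_dist x) |>.trans_lt hh
  obtain ⟨a, ha⟩ := hg.affine (h x₀) ht (h ∘ (↑)) (by fun_prop) fun a => by
    have hga : t • (g a - y) = F a - F x₀ := (sub_eq_iff_eq_add'.2 (hF a)).symm
    calc dist (h a) (h x₀ + t • (g a - y)) = ‖(h a - F a) - (h x₀ - F x₀)‖ := by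
          rw [dist_eq_norm, hga]; congr 1; abel
      _ ≤ ‖h a - F a‖ + ‖h x₀ - F x₀‖ := norm_sub_le _ _
      _ ≤ t * ε := by linarith [hclose a, hclose x₀]
  exact ⟨a, a.2, ha⟩

theorem exists_dist_lt_mem_interior_setOf_apply_mem_image [NormalSpace X] [T1Space X]
    [FiniteDimensional ℝ Y] (f : C(X, Y)) {A : Set X} (hA : IsClosed A) (x₀ : X) {δ : ℝ}
    (hδ : 0 < δ) (hfA : ∀ a ∈ A, dist (f a) (f x₀) ≤ δ / 4) (g : C(A, Y)) {y : Y} {ε : ℝ}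
    (hε : 0 < ε) (hg : IsStableValue ε g y) :
    ∃ F : C(X, Y), dist F f < δ ∧ F ∈ interior {h : C(X, Y) | h x₀ ∈ h '' A} := by
  by_cases hx₀ : x₀ ∈ A
  · have hall : {h : C(X, Y) | h x₀ ∈ h '' A} = univ := eq_univ_of_forall fun h => ⟨x₀, hx₀, rfl⟩
    exact ⟨f, by simpa using hδ, by rw [hall, interior_univ]; exact mem_univ f⟩
  have : CompactSpace A := isCompact_iff_compactSpace.1 hA.isCompact
  set M := ‖g - ContinuousMap.const A y‖
  set t := δ / (4 * (M + 1))
  have hM : M + 1 ≠ 0 := by positivity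
  have ht : 0 < t := by positivity
  have hgt : ∀ a, ‖t • (g a - y)‖ ≤ δ / 4 := fun a =>
    calc ‖t • (g a - y)‖ = t * ‖(g - ContinuousMap.const A y) a‖ := by
          rw [norm_smul, Real.norm_of_nonneg ht.le]; rfl
      _ ≤ t * (M + 1) := by
          gcongr
          exact ((g - _).norm_coe_le_norm a).trans (le_add_of_nonneg_right zero_le_one)
      _ = δ / 4 := by simp only [t]; field_simp
  set u : C(A, Y) := ContinuousMap.const A (f x₀) + t • (g - ContinuousMap.const A y)
  have hu : ∀ a, dist (u a) (f a) ≤ δ / 2 := fun a =>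
    calc dist (f x₀ + t • (g a - y)) (f a) ≤ dist (f x₀) (f a) + ‖t • (g a - y)‖ := by
          rw [dist_eq_norm, dist_eq_norm, add_sub_right_comm]; exact norm_add_le _ _
      _ ≤ δ / 4 + δ / 4 := add_le_add (dist_comm (f a) (f x₀) ▸ hfA a a.2) (hgt a)
      _ = δ / 2 := by ring
  obtain ⟨F, hFf, hFx₀, hFA⟩ :=
    f.exists_dist_lt_apply_eq_restrict_eq hA hx₀ u (δ := δ) (by positivity) hu (by linarith)
  refine ⟨F, hFf, mem_interior_setOf_apply_mem_image_of_isStableValue F hε ht hg fun a => ?_⟩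
  simpa [u, hFx₀] using congr($hFA a)

end Perturbation

theorem residual_setOf_infinite_setOf_mem {Z : Type*} [TopologicalSpace Z] (S : ℕ → Set Z)
    (hS : ∀ N, Dense (⋃ i ≥ N, interior (S i))) : {z | {i | z ∈ S i}.Infinite} ∈ residual Z := by
  refine mem_of_superset (countable_iInter_mem.2 fun N =>
    residual_of_dense_open (isOpen_biUnion fun i _ => isOpen_interior) (hS N)) fun z hz => ?_
  refine infinite_of_forall_exists_gt fun N => ?_
  obtain ⟨i, hi, hzi⟩ := mem_iUnion₂.1 (mem_iInter.1 hz (N + 1))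
  exact ⟨i, show z ∈ S i from interior_subset hzi, hi⟩

theorem dense_iUnion_interior_setOf_apply_mem_image {K Y : Type*} [MetricSpace K] [CompactSpace K]
    [NormedAddCommGroup Y] [NormedSpace ℝ Y] [FiniteDimensional ℝ Y] (x₀ : K) (Ks : ℕ → Set K)
    (hKc : ∀ i, IsClosed (Ks i))
    (hdiam : Tendsto (fun i => diam (Ks i ∪ {x₀})) atTop (𝓝 0))
    (hstable : ∀ i, ∃ (g : C(Ks i, Y)) (y : Y) (ε : ℝ), 0 < ε ∧ IsStableValue ε g y) (N : ℕ) :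
    Dense (⋃ i ≥ N, interior {f : C(K, Y) | f x₀ ∈ f '' Ks i}) := by
  refine dense_iff.2 fun f δ hδ => ?_
  obtain ⟨ρ, hρ, hfρ⟩ := Metric.uniformContinuous_iff.1
    (CompactSpace.uniformContinuous_of_continuous f.continuous) (δ / 4) (by positivity)
  obtain ⟨i, hiρ, hiN⟩ := ((hdiam.eventually (gt_mem_nhds hρ)).and (eventually_ge_atTop N)).exists
  have hfKs : ∀ a ∈ Ks i, dist (f a) (f x₀) ≤ δ / 4 := fun a ha =>
    (hfρ <| (dist_le_diam_of_mem (s := Ks i ∪ {x₀}) isBounded_of_compactSpace (Or.inl ha)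
      (Or.inr rfl)).trans_lt hiρ).le
  obtain ⟨g, y, ε, hε, hg⟩ := hstable i
  obtain ⟨F, hFf, hF⟩ :=
    exists_dist_lt_mem_interior_setOf_apply_mem_image f (hKc i) x₀ hδ hfKs g hε hg
  exact ⟨F, hFf, mem_biUnion hiN hF⟩

theorem stmt8_general {K : Type*} [MetricSpace K] [CompactSpace K] (x₀ : K) (n : ℕ)
    (Ks : ℕ → Set K) (hKc : ∀ i, IsCompact (Ks i))
    (hdiam : Filter.Tendsto (fun i => Metric.diam (Ks i ∪ {x₀})) Filter.atTop (nhds 0))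
    (hstable : ∀ i, ∃ g : ↥(Ks i) → EuclideanSpace ℝ (Fin n), Continuous g ∧
      ∃ (y : EuclideanSpace ℝ (Fin n)) (ε : ℝ), 0 < ε ∧
        ∀ h : ↥(Ks i) → EuclideanSpace ℝ (Fin n), Continuous h →
          (∀ x, dist (h x) (g x) ≤ 2 * ε) → y ∈ Set.range h) :
    {f : C(K, EuclideanSpace ℝ (Fin n)) | {i | f x₀ ∈ ⇑f '' Ks i}.Infinite} ∈ residual _ := by
  refine residual_setOf_infinite_setOf_mem _ <|
    dense_iUnion_interior_setOf_apply_mem_image x₀ Ks (fun i => (hKc i).isClosed) hdiam fun i => ?_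
  obtain ⟨g, hg, y, ε, hε, hstab⟩ := hstable i
  exact ⟨⟨g, hg⟩, y, 2 * ε, by positivity, hstab⟩

theorem stmt8 {K : Type*} [MetricSpace K] [CompactSpace K] (x₀ : K) (n : ℕ) (hn : 0 < n)
    (Ks : ℕ → Set K) (hKc : ∀ i, IsCompact (Ks i))
    (hdiam : Filter.Tendsto (fun i => Metric.diam (Ks i ∪ {x₀})) Filter.atTop (nhds 0))
    (hstable : ∀ i, ∃ g : ↥(Ks i) → EuclideanSpace ℝ (Fin n), Continuous g ∧
      ∃ (y : EuclideanSpace ℝ (Fin n)) (ε : ℝ), 0 < ε ∧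
        ∀ h : ↥(Ks i) → EuclideanSpace ℝ (Fin n), Continuous h →
          (∀ x, dist (h x) (g x) ≤ 2 * ε) → y ∈ Set.range h) :
    {f : C(K, EuclideanSpace ℝ (Fin n)) | {i | f x₀ ∈ ⇑f '' Ks i}.Infinite} ∈ residual _ :=
  stmt8_general x₀ n Ks hKc hdiam hstable
end

section
/- Let K be a compact metric space and let m and n be positive integers. Define 𝒟_m ⊆ C(K, ℝⁿ) as the set of f for which there exists ε > 0 such that for all g ∈ C(K, ℝⁿ) with ‖g − f‖_∞ ≤ ε and all y ∈ g(K) with dist(y, ∂(g(K))) > 1/m, one has y ∈ f(K). If every closed ball B(x, r) in K (x ∈ K, r > 0) is uncountable, then 𝒟_m is dense in C(K, ℝⁿ). -/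
open scoped ENNReal NNReal

open Metric Set

/-- A preconnected set meeting both a set and its complement meets the frontier. -/
lemma preconn_inter_frontier {X : Type*} [TopologicalSpace X] {s t : Set X}
    (hs : IsPreconnected s) (h1 : (s ∩ t).Nonempty) (h2 : (s \ t).Nonempty) :
    (s ∩ frontier t).Nonempty := by
  by_contra hfr
  rw [Set.not_nonempty_iff_eq_empty] at hfr
  have hdisj : ∀ x ∈ s, x ∉ frontier t := by
    intro x hx hxf
    exact absurd (Set.mem_inter hx hxf) (by simp [hfr])
  have hsub : s ⊆ interior t ∪ (closure t)ᶜ := by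
    intro x hx
    by_cases hxc : x ∈ closure t
    · left
      rcases frontier_eq_closure_inter_closure (s := t) ▸ (hdisj x hx) with h
      by_contra hint
      exact hdisj x hx ⟨hxc, by simpa [closure_compl] using hint⟩
    · right; exact hxc
  obtain ⟨y, hys, hyt⟩ := h1
  obtain ⟨z, hzs, hzt⟩ := h2
  have hyint : y ∈ interior t := by
    rcases hsub hys with h | h
    · exact h
    · exact absurd (subset_closure hyt) h
  have hzcl : z ∈ (closure t)ᶜ := by
    rcases hsub hzs with h | h
    · exact absurd (interior_subset h) hzt
    · exact h
  obtain ⟨w, hw⟩ := hs (interior t) (closure t)ᶜ isOpen_interior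
    (isOpen_compl_iff.2 isClosed_closure) hsub ⟨y, hys, hyint⟩ ⟨z, hzs, hzcl⟩
  exact hw.2.2 (subset_closure (interior_subset hw.2.1))

/-- Stability of a compact set: points close to `C` whose whole `r`-ball is close
to `C` must lie in `C`, for a suitable closeness `ε`. -/
lemma stab_aux {E : Type*} [NormedAddCommGroup E] [NormedSpace ℝ E] [ProperSpace E]
    {C : Set E} (hC : IsCompact C) (hne : C.Nonempty) {r : ℝ} (hr : 0 < r) :
    ∃ ε > (0 : ℝ), ∀ y : E, infDist y C ≤ ε →
      (∀ v : E, ‖v‖ < r → infDist (y + v) C ≤ ε) → y ∈ C := by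
  by_contra h
  push_neg at h
  set D : ℕ → Set E := fun k => {y | infDist y C ≤ 1 / (k + 1)} with hDdef
  set S : ℕ → Set E := fun k =>
    (D k ∩ ⋂ v ∈ ball (0 : E) r, (· + v) ⁻¹' D k) ∩ (interior C)ᶜ with hSdef
  have hDcl : ∀ k, IsClosed (D k) :=
    fun k => isClosed_Iic.preimage (continuous_infDist_pt C)
  have hScl : ∀ k, IsClosed (S k) := by
    intro k
    refine (((hDcl k).inter (isClosed_biInter fun v _ =>
      (hDcl k).preimage (by continuity))).inter isOpen_interior.isClosed_compl)
  have hmono : ∀ k, S (k + 1) ⊆ S k := by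
    intro k
    have hle : (1 : ℝ) / (k + 1 + 1) ≤ 1 / (k + 1) := by
      apply one_div_le_one_div_of_le
      · positivity
      · push_cast; linarith
    have hDm : D (k + 1) ⊆ D k := by
      intro y hy
      simp only [hDdef, Set.mem_setOf_eq] at hy ⊢
      push_cast at hy ⊢
      linarith
    refine Set.inter_subset_inter ?_ le_rfl
    exact Set.inter_subset_inter hDm (Set.iInter₂_mono fun v _ => Set.preimage_mono hDm)
  have hSn : ∀ k, (S k).Nonempty := by
    intro k
    have hpos : (0 : ℝ) < 1 / (k + 1) := by positivity
    obtain ⟨y, hy1, hy2, hy3⟩ := h (1 / (k + 1)) hpos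
    refine ⟨y, ⟨⟨hy1, ?_⟩, fun hint => hy3 (interior_subset hint)⟩⟩
    refine Set.mem_iInter₂.2 fun v hv => ?_
    exact hy2 v (by simpa [mem_ball, dist_zero_right] using hv)
  -- each S k is compact
  obtain ⟨c₀, hc₀⟩ := id hne
  have hbound : S 0 ⊆ closedBall c₀ (1 + Metric.diam C) := by
    intro y hy
    have hy1 : infDist y C ≤ 1 := by
      have := hy.1.1
      simpa using this.trans (by norm_num)
    obtain ⟨c, hcC, hcd⟩ := hC.exists_infDist_eq_dist hne y
    have h1 : dist y c ≤ 1 := hcd ▸ hy1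
    have h2 : dist c c₀ ≤ Metric.diam C := Metric.dist_le_diam_of_mem hC.isBounded hcC hc₀
    have := dist_triangle y c c₀
    simp only [mem_closedBall]
    linarith
  have hS0 : IsCompact (S 0) :=
    (isCompact_closedBall c₀ _).of_isClosed_subset (hScl 0) hbound
  obtain ⟨y, hy⟩ := IsCompact.nonempty_iInter_of_sequence_nonempty_isCompact_isClosed
    S hmono hSn hS0 hScl
  have hymem : ∀ k, y ∈ S k := Set.mem_iInter.1 hy
  -- the ball of radius r around y is contained in C
  have hballC : ball y r ⊆ C := by
    intro z hz
    have hzd : ∀ k : ℕ, infDist z C ≤ 1 / (k + 1) := by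
      intro k
      have h2 := (hymem k).1.2
      have hv : z - y ∈ ball (0 : E) r := by
        simpa [mem_ball, dist_zero_right, ← dist_eq_norm] using hz
      have := Set.mem_iInter₂.1 h2 (z - y) hv
      simp only [hDdef, Set.mem_preimage, Set.mem_setOf_eq] at this
      simpa using this
    have hle0 : infDist z C ≤ 0 := by
      refine ge_of_tendsto tendsto_one_div_add_atTop_nhds_zero_nat ?_
      filter_upwards with k
      exact_mod_cast hzd k
    have heq : infDist z C = 0 := le_antisymm hle0 infDist_nonneg
    exact (hC.isClosed.mem_iff_infDist_zero hne).2 heq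
  have : y ∈ interior C := mem_interior.2 ⟨ball y r, hballC, isOpen_ball, mem_ball_self hr⟩
  exact (hymem 0).2 this

theorem stmt9 {K : Type*} [MetricSpace K] [CompactSpace K] (m n : ℕ) (hm : 0 < m) (hn : 0 < n)
    (hball : ∀ (x : K) (r : ℝ), 0 < r → ¬(Metric.closedBall x r).Countable) :
    Dense {f : C(K, EuclideanSpace ℝ (Fin n)) | ∃ ε > (0 : ℝ),
      ∀ g : C(K, EuclideanSpace ℝ (Fin n)), dist g f ≤ ε →
        ∀ y ∈ Set.range ⇑g, (1 / m : ℝ) < Metric.infDist y (frontier (Set.range ⇑g)) →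
          y ∈ Set.range ⇑f} := by
  intro f
  refine subset_closure ?_
  rcases isEmpty_or_nonempty K with hK | hK
  · exact ⟨1, one_pos, fun g hg y hy _ => absurd hy (by simp [Set.range_eq_empty])⟩
  have hmR : (0 : ℝ) < (m : ℝ) := by exact_mod_cast hm
  set C : Set (EuclideanSpace ℝ (Fin n)) := Set.range ⇑f with hCdef
  have hCc : IsCompact C := isCompact_range f.continuous
  have hCne : C.Nonempty := Set.range_nonempty _
  have hrpos : (0 : ℝ) < 1 / (2 * m) := by positivity
  obtain ⟨ε, hε, hstab⟩ := stab_aux hCc hCne hrpos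
  refine ⟨ε, hε, ?_⟩
  intro g hg y hy hdeep
  -- every point within 1/m of y is in the range of g
  have hballg : ∀ z, dist z y ≤ 1 / m → z ∈ Set.range ⇑g := by
    intro z hz
    by_contra hzout
    have hconn : IsPreconnected (segment ℝ y z) := (convex_segment y z).isPreconnected
    obtain ⟨w, hwseg, hwfr⟩ := preconn_inter_frontier hconn
      ⟨y, left_mem_segment ℝ y z, hy⟩ ⟨z, right_mem_segment ℝ y z, hzout⟩
    obtain ⟨a, b, ha, hb, hab, hw⟩ := hwseg
    have hyw : y - w = b • (y - z) := by
      rw [← hw]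
      have ha' : a = 1 - b := by linarith
      rw [ha']
      module
    have hdyw : dist y w ≤ dist z y := by
      rw [dist_eq_norm, hyw, norm_smul, Real.norm_of_nonneg hb]
      have hb1 : b ≤ 1 := by linarith
      have hnn : ‖y - z‖ = dist z y := by rw [← dist_eq_norm, dist_comm]
      rw [hnn]
      nlinarith [dist_nonneg (x := z) (y := y)]
    have hinf : infDist y (frontier (Set.range ⇑g)) ≤ dist y w :=
      infDist_le_dist_of_mem hwfr
    linarith
  -- a point of range g is ε-close to C
  have hclose : ∀ z ∈ Set.range ⇑g, infDist z C ≤ ε := by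
    rintro z ⟨x, rfl⟩
    calc infDist (g x) C ≤ dist (g x) (f x) := infDist_le_dist_of_mem (Set.mem_range_self x)
      _ ≤ dist g f := ContinuousMap.dist_apply_le_dist x
      _ ≤ ε := hg
  refine hstab y (hclose y hy) ?_
  intro v hv
  refine hclose _ (hballg (y + v) ?_)
  have h1 : dist (y + v) y = ‖v‖ := by
    rw [dist_eq_norm]; simp
  rw [h1]
  have : (1 : ℝ) / (2 * m) ≤ 1 / m := by
    apply one_div_le_one_div_of_le hmR
    nlinarith
  linarith
end

section
/- Let n be a positive integer, Q ⊆ ℝⁿ a closed axis-parallel cube, f₀ : K → ℝⁿ continuous on a compact metric space K with f₀(K) ⊆ Q, C ⊆ K a compact subset homeomorphic to the Cantor set, and U an open set with C ⊆ U ⊆ K. Then there exists a continuous f : K → Q such that f = f₀ on K \ U and f(C) = Q; in particular f(K) = Q if f₀(K) ⊆ Q. -/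
/-!
By the Hausdorff–Alexandroff theorem the unit cube is a continuous image of Cantor space, hence
of `C`; since the unit cube is a Tietze extension space, this surjection extends to all of `K`,
and an affine map carries it onto `Q`. An Urysohn function equal to `1` on `C` and `0` off `U`
interpolates between this map and `f₀`, and convexity of `Q` keeps the interpolation inside `Q`.
-/

open Set

universe u v

section Extension

variable {X : Type u} [TopologicalSpace X] [NormalSpace X]

theorem exists_continuousMap_image_eq_univ_of_homeomorph_cantorSpace
    {Y : Type v} [MetricSpace Y] [CompactSpace Y] [Nonempty Y] [TietzeExtension.{u, v} Y]
    {C : Set X} (hC : IsClosed C) (e : C ≃ₜ (ℕ → Bool)) :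
    ∃ G : C(X, Y), G '' C = univ := by
  obtain ⟨g, hg, hg_surj⟩ := exists_nat_bool_continuous_surjective_of_compact Y
  obtain ⟨G, hG⟩ := ContinuousMap.exists_restrict_eq hC (ContinuousMap.comp ⟨g, hg⟩ e)
  refine ⟨G, eq_univ_of_forall fun y => ?_⟩
  obtain ⟨x, rfl⟩ := hg_surj y
  exact ⟨e.symm x, (e.symm x).2, by simpa using congr($hG (e.symm x))⟩

theorem exists_continuousMap_eqOn_eqOn_of_convex {E : Type*} [AddCommGroup E] [Module ℝ E]
    [TopologicalSpace E] [ContinuousAdd E] [ContinuousSMul ℝ E] {s : Set E} (hs : Convex ℝ s)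
    (f g : C(X, E)) (hf : ∀ x, f x ∈ s) (hg : ∀ x, g x ∈ s)
    {A B : Set X} (hA : IsClosed A) (hB : IsClosed B) (hAB : Disjoint A B) :
    ∃ h : C(X, E), (∀ x, h x ∈ s) ∧ EqOn h f A ∧ EqOn h g B := by
  obtain ⟨ρ, hρ0, hρ1, hρ01⟩ := exists_continuous_zero_one_of_isClosed hB hA hAB.symm
  refine ⟨⟨fun x => ρ x • f x + (1 - ρ x) • g x, by fun_prop⟩, fun x => ?_, fun x hx => ?_,
    fun x hx => ?_⟩
  · exact hs (hf x) (hg x) (hρ01 x).1 (sub_nonneg.mpr (hρ01 x).2) (add_sub_cancel _ _)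
  · simp [hρ1 hx]
  · simp [hρ0 hx]

end Extension

section Cube

variable {ι : Type*} (a : ι → ℝ) (c : ℝ)

def cubeParam (t : ι → unitInterval) : EuclideanSpace ℝ ι :=
  WithLp.toLp 2 fun i => a i + c * t i

theorem continuous_cubeParam : Continuous (cubeParam a c) :=
  (PiLp.continuous_toLp 2 _).comp (by fun_prop)

theorem image_add_mul_unitInterval {c : ℝ} (hc : 0 ≤ c) (b : ℝ) :
    (fun t => b + c * t) '' unitInterval = Icc b (b + c) := by
  rw [← image_image (b + ·) (c * ·), unitInterval, image_mul_left_Icc hc zero_le_one,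
    image_const_add_Icc]
  simp

theorem range_cubeParam {c : ℝ} (hc : 0 ≤ c) :
    range (cubeParam a c) = {y : EuclideanSpace ℝ ι | ∀ i, y i ∈ Icc (a i) (a i + c)} := by
  ext y
  simp only [mem_ofPred_eq, ← image_add_mul_unitInterval hc]
  constructor
  · rintro ⟨t, rfl⟩ i
    exact ⟨t i, (t i).2, rfl⟩
  · intro hy
    choose t ht hty using hy
    exact ⟨fun i => ⟨t i, ht i⟩, by ext i; exact hty i⟩

theorem convex_setOf_forall_apply_mem_Icc :
    Convex ℝ {y : EuclideanSpace ℝ ι | ∀ i, y i ∈ Icc (a i) (a i + c)} :=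
  fun _ hx _ hy _ _ hμ hν hμν i => convex_Icc _ _ (hx i) (hy i) hμ hν hμν

end Cube

theorem stmt19_general {K : Type*} [MetricSpace K] (n : ℕ)
    (a : Fin n → ℝ) (c : ℝ) (hc : 0 ≤ c)
    (f₀ : C(K, EuclideanSpace ℝ (Fin n)))
    (hf₀ : ∀ x, ∀ i, f₀ x i ∈ Set.Icc (a i) (a i + c))
    (C : Set K) (hC : IsCompact C) (hhomeo : Nonempty (↥C ≃ₜ (ℕ → Bool)))
    (U : Set K) (hU : IsOpen U) (hCU : C ⊆ U) :
    ∃ f : K → EuclideanSpace ℝ (Fin n), Continuous f ∧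
      (∀ x, ∀ i, f x i ∈ Set.Icc (a i) (a i + c)) ∧
      Set.EqOn f (⇑f₀) Uᶜ ∧
      f '' C = {y : EuclideanSpace ℝ (Fin n) | ∀ i, y i ∈ Set.Icc (a i) (a i + c)} ∧
      Set.range f = {y : EuclideanSpace ℝ (Fin n) | ∀ i, y i ∈ Set.Icc (a i) (a i + c)} := by
  obtain ⟨e⟩ := hhomeo
  obtain ⟨G, hG⟩ := exists_continuousMap_image_eq_univ_of_homeomorph_cantorSpace
    (Y := Fin n → unitInterval) hC.isClosed e
  let φ : C(Fin n → unitInterval, EuclideanSpace ℝ (Fin n)) := ⟨_, continuous_cubeParam a c⟩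
  have hφG : ∀ x, φ (G x) ∈ range (cubeParam a c) := fun x => mem_range_self _
  rw [range_cubeParam a hc] at hφG
  obtain ⟨f, hf_cube, hf_C, hf_U⟩ := exists_continuousMap_eqOn_eqOn_of_convex
    (convex_setOf_forall_apply_mem_Icc a c) (φ.comp G) f₀ hφG hf₀ hC.isClosed hU.isClosed_compl
    (disjoint_compl_right_iff_subset.mpr hCU)
  have hf_image : f '' C = {y | ∀ i, y i ∈ Icc (a i) (a i + c)} := by
    rw [hf_C.image_eq, ContinuousMap.coe_comp, image_comp, hG, image_univ, ContinuousMap.coe_mk,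
      range_cubeParam a hc]
  exact ⟨f, f.continuous, hf_cube, hf_U, hf_image,
    (range_subset_iff.mpr hf_cube).antisymm (hf_image ▸ image_subset_range f C)⟩

theorem stmt19 {K : Type*} [MetricSpace K] [CompactSpace K] (n : ℕ) (hn : 0 < n)
    (a : Fin n → ℝ) (c : ℝ) (hc : 0 ≤ c)
    (f₀ : C(K, EuclideanSpace ℝ (Fin n)))
    (hf₀ : ∀ x, ∀ i, f₀ x i ∈ Set.Icc (a i) (a i + c))
    (C : Set K) (hC : IsCompact C) (hhomeo : Nonempty (↥C ≃ₜ (ℕ → Bool)))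
    (U : Set K) (hU : IsOpen U) (hCU : C ⊆ U) :
    ∃ f : K → EuclideanSpace ℝ (Fin n), Continuous f ∧
      (∀ x, ∀ i, f x i ∈ Set.Icc (a i) (a i + c)) ∧
      Set.EqOn f (⇑f₀) Uᶜ ∧
      f '' C = {y : EuclideanSpace ℝ (Fin n) | ∀ i, y i ∈ Set.Icc (a i) (a i + c)} ∧
      Set.range f = {y : EuclideanSpace ℝ (Fin n) | ∀ i, y i ∈ Set.Icc (a i) (a i + c)} :=
  stmt19_general n a c hc f₀ hf₀ C hC hhomeo U hU hCU
end
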